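/- Let d ≥ 2 and let J = (1/(d(d−1))) Σ_{i≠j} E_{ii} ⊗ E_{jj}, a positive semidefinite matrix on ℂ^d ⊗ ℂ^d. Then for every Hermitian d×d matrix X such that I_d ⊗ X ≼ J in the Loewner order, one has tr(X) ≤ 0. Consequently sup { tr(X) : X Hermitian, I_d ⊗ X ≼ J } = 0. -/

import Mathlib

/-!
Positivity of `J - I ⊗ X` makes every diagonal entry nonnegative, and `J` vanishes at the
diagonal entries indexed by `(i, i)`, so `X i i ≤ 0` for each `i`. The value `0` is attained
at `X = 0`, since `J` itself is positive semidefinite.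
-/

open Matrix Kronecker BigOperators
open scoped ComplexOrder

noncomputable section

/-- The trace norm (sum of singular values) of a complex matrix: `tr √(AᴴA)`. -/
def traceNorm {m n : Type*} [Fintype m] [Fintype n] [DecidableEq n] (A : Matrix m n ℂ) : ℝ :=
  ((Matrix.posSemidef_conjTranspose_mul_self A).1.eigenvectorUnitary.1 *
    Matrix.diagonal (((↑) : ℝ → ℂ) ∘ Real.sqrt ∘ (Matrix.posSemidef_conjTranspose_mul_self A).1.eigenvalues) *
    (star (Matrix.posSemidef_conjTranspose_mul_self A).1.eigenvectorUnitary : Matrix n n ℂ)).trace.re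

/-- A density matrix: positive semidefinite with trace one. -/
def IsDensity {n : Type*} [Fintype n] [DecidableEq n] (ρ : Matrix n n ℂ) : Prop :=
  ρ.PosSemidef ∧ ρ.trace = 1

/-- Trace norm contraction coefficient of a map on matrices. -/
def etaTr {dA dB : ℕ} (Φ : Matrix (Fin dA) (Fin dA) ℂ → Matrix (Fin dB) (Fin dB) ℂ) : ℝ :=
  sSup {r : ℝ | ∃ ρ σ : Matrix (Fin dA) (Fin dA) ℂ, IsDensity ρ ∧ IsDensity σ ∧ ρ ≠ σ ∧
    r = traceNorm (Φ ρ - Φ σ) / traceNorm (ρ - σ)}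

/-- Optimal success probability for transmitting one of `k` messages through `Φ`. -/
def Psucc {dA dB : ℕ} (Φ : Matrix (Fin dA) (Fin dA) ℂ → Matrix (Fin dB) (Fin dB) ℂ)
    (k : ℕ) : ℝ :=
  sSup {r : ℝ | ∃ (M : Fin k → Matrix (Fin dB) (Fin dB) ℂ)
      (ρ : Fin k → Matrix (Fin dA) (Fin dA) ℂ),
    (∀ i, (M i).PosSemidef) ∧ (∑ i, M i = 1) ∧ (∀ i, IsDensity (ρ i)) ∧
    r = (1 / (k : ℝ)) * ∑ i, ((M i * Φ (ρ i)).trace).re}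

/-- The Euclidean (ℓ₂) norm of a complex vector. -/
def l2norm {n : Type*} [Fintype n] (v : n → ℂ) : ℝ :=
  Real.sqrt (∑ i, ‖v i‖ ^ 2)

/-- Choi state of a map on matrices: `(1/dA) ∑ᵢⱼ Eᵢⱼ ⊗ Φ(Eᵢⱼ)`. -/
def choi {dA dB : ℕ} (Φ : Matrix (Fin dA) (Fin dA) ℂ → Matrix (Fin dB) (Fin dB) ℂ) :
    Matrix (Fin dA × Fin dB) (Fin dA × Fin dB) ℂ :=
  (dA : ℂ)⁻¹ • ∑ i : Fin dA, ∑ j : Fin dA,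
    (Matrix.single i j (1 : ℂ)) ⊗ₖ (Φ (Matrix.single i j (1 : ℂ)))

/-- The matrix `J = (1/(d(d−1))) ∑_{i≠j} E_{ii} ⊗ E_{jj}` on `ℂ^d ⊗ ℂ^d`. -/
def Jmat (d : ℕ) : Matrix (Fin d × Fin d) (Fin d × Fin d) ℂ :=
  ((d : ℂ) * ((d : ℂ) - 1))⁻¹ •
    ∑ p ∈ Finset.univ.filter (fun p : Fin d × Fin d => p.1 ≠ p.2),
      Matrix.single p.1 p.1 (1 : ℂ) ⊗ₖ Matrix.single p.2 p.2 (1 : ℂ)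

lemma Matrix.posSemidef_single_self_one {n : Type*} [Fintype n] [DecidableEq n] (i : n) :
    (Matrix.single i i (1 : ℂ)).PosSemidef := by
  rw [← diagonal_single]
  exact posSemidef_diagonal_iff.mpr fun j => by
    rcases eq_or_ne j i with rfl | h <;> simp [*]

lemma Matrix.le_apply_of_posSemidef_sub_one_kronecker {m n : Type*} [Fintype m] [Fintype n]
    [DecidableEq m] {J : Matrix (m × n) (m × n) ℂ} {X : Matrix n n ℂ}
    (h : (J - (1 : Matrix m m ℂ) ⊗ₖ X).PosSemidef) (i : m) (j : n) :
    X j j ≤ J (i, j) (i, j) := by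
  simpa [sub_nonneg] using h.diag_nonneg (i := (i, j))

lemma Jmat_posSemidef (d : ℕ) : (Jmat d).PosSemidef := by
  refine (posSemidef_sum _ fun p _ =>
    (posSemidef_single_self_one p.1).kronecker (posSemidef_single_self_one p.2)).smul ?_
  have : (0 : ℝ) ≤ (d : ℝ) * ((d : ℝ) - 1) := by
    rcases d with _ | d <;> push_cast <;> nlinarith
  have hcast : (d : ℂ) * ((d : ℂ) - 1) = ((d * (d - 1 : ℝ) : ℝ) : ℂ) := by push_cast; rfl
  rw [hcast, ← Complex.ofReal_inv]
  exact Complex.zero_le_real.mpr (inv_nonneg.mpr this)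

lemma Jmat_apply_self_self (d : ℕ) (i : Fin d) : Jmat d (i, i) (i, i) = 0 := by
  simp only [Jmat, Matrix.smul_apply, Matrix.sum_apply, kroneckerMap_apply]
  rw [Finset.sum_eq_zero, smul_zero]
  rintro ⟨a, b⟩ hab
  simp only [Finset.mem_filter, Finset.mem_univ, true_and] at hab
  simp only [single_apply, and_self, mul_ite, mul_one, mul_zero, ite_eq_right_iff, one_ne_zero,
    imp_false]
  rintro rfl rfl
  exact hab rfl

lemma trace_re_nonpos_of_posSemidef_Jmat_sub {d : ℕ} {X : Matrix (Fin d) (Fin d) ℂ}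
    (h : (Jmat d - (1 : Matrix (Fin d) (Fin d) ℂ) ⊗ₖ X).PosSemidef) : X.trace.re ≤ 0 := by
  have : X.trace ≤ 0 := Finset.sum_nonpos fun i _ => by
    simpa [Jmat_apply_self_self] using le_apply_of_posSemidef_sub_one_kronecker h i i
  exact (Complex.le_def.mp this).1

theorem doeblin_coefficient_vanishes_general {d : ℕ} :
    (∀ X : Matrix (Fin d) (Fin d) ℂ, X.IsHermitian →
      (Jmat d - (1 : Matrix (Fin d) (Fin d) ℂ) ⊗ₖ X).PosSemidef →
      X.trace.re ≤ 0) ∧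
    sSup {r : ℝ | ∃ X : Matrix (Fin d) (Fin d) ℂ, X.IsHermitian ∧
      (Jmat d - (1 : Matrix (Fin d) (Fin d) ℂ) ⊗ₖ X).PosSemidef ∧
      r = X.trace.re} = 0 := by
  refine ⟨fun X _ h => trace_re_nonpos_of_posSemidef_Jmat_sub h, IsGreatest.csSup_eq ⟨?_, ?_⟩⟩
  · exact ⟨0, isHermitian_zero, by simpa using Jmat_posSemidef d, by simp⟩
  · rintro r ⟨X, -, h, rfl⟩
    exact trace_re_nonpos_of_posSemidef_Jmat_sub h

/-- for `d ≥ 2`, every Hermitian `X` with `I ⊗ X ≼ J` has `tr(X) ≤ 0`;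
consequently the Doeblin coefficient `sup{tr X : I ⊗ X ≼ J} = 0`. -/
theorem doeblin_coefficient_vanishes {d : ℕ} (hd : 2 ≤ d) :
    (∀ X : Matrix (Fin d) (Fin d) ℂ, X.IsHermitian →
      (Jmat d - (1 : Matrix (Fin d) (Fin d) ℂ) ⊗ₖ X).PosSemidef →
      X.trace.re ≤ 0) ∧
    sSup {r : ℝ | ∃ X : Matrix (Fin d) (Fin d) ℂ, X.IsHermitian ∧
      (Jmat d - (1 : Matrix (Fin d) (Fin d) ℂ) ⊗ₖ X).PosSemidef ∧
      r = X.trace.re} = 0 :=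
  doeblin_coefficient_vanishes_general
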